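/- (Klein's inequality) For any two n×n density matrices ρ and σ with supp(ρ) ⊆ supp(σ), the quantum relative entropy S(ρ‖σ) = Tr(ρ log ρ) − Tr(ρ log σ) is nonnegative, with equality if and only if ρ = σ. -/

import Mathlib

open Matrix Kronecker
open scoped ComplexOrder

/-- Matrix logarithm of a Hermitian matrix via its spectral decomposition,
with the convention `Real.log 0 = 0` off the support. -/
noncomputable def matLog {n : Type*} [Fintype n] [DecidableEq n] {A : Matrix n n ℂ}
    (hA : A.IsHermitian) : Matrix n n ℂ :=
  (hA.eigenvectorUnitary : Matrix n n ℂ) *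
    Matrix.diagonal (fun i => (Real.log (hA.eigenvalues i) : ℂ)) *
    star (hA.eigenvectorUnitary : Matrix n n ℂ)

/-- `Tr(A log A)` for a Hermitian matrix `A`, i.e. `∑ λᵢ log λᵢ` with `0 log 0 = 0`. -/
noncomputable def entSum {n : Type*} [Fintype n] [DecidableEq n] {A : Matrix n n ℂ}
    (hA : A.IsHermitian) : ℝ :=
  ∑ i, hA.eigenvalues i * Real.log (hA.eigenvalues i)

/-- Quantum relative entropy `S(ρ‖σ) = Tr(ρ log ρ) − Tr(ρ log σ)`. -/
noncomputable def qRelEnt {n : Type*} [Fintype n] [DecidableEq n] {ρ σ : Matrix n n ℂ}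
    (hρ : ρ.IsHermitian) (hσ : σ.IsHermitian) : ℝ :=
  entSum hρ - (Matrix.trace (ρ * matLog hσ)).re

/-- The objective `ρ ↦ Tr(ρ log ρ) − Tr(ρ Δ̃)`. -/
noncomputable def obj {n : Type*} [Fintype n] [DecidableEq n] (Δ : Matrix n n ℂ)
    {ρ : Matrix n n ℂ} (hρ : ρ.IsHermitian) : ℝ :=
  entSum hρ - (Matrix.trace (ρ * Δ)).re

/-- Partial trace over the first tensor factor. -/
noncomputable def ptrace1 {n m : Type*} [Fintype n] (C : Matrix (n × m) (n × m) ℂ) :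
    Matrix m m ℂ :=
  Matrix.of fun k l => ∑ i, C (i, k) (i, l)

/-- Partial trace over the second tensor factor. -/
noncomputable def ptrace2 {n m : Type*} [Fintype m] (C : Matrix (n × m) (n × m) ℂ) :
    Matrix n n ℂ :=
  Matrix.of fun i j => ∑ k, C (i, k) (j, k)

/-!
Diagonalise `ρ = U diag(p) U*` and `σ = V diag(q) V*`. With `W = U* V`, the matrix
`P i j = |W i j|²` is doubly stochastic and `S(ρ‖σ) = ∑ p log p − ∑ p i P i j log q j`, so the quantum
statement reduces to a classical one. Since `P` is doubly stochastic and `tr ρ = tr σ`, subtracting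
`∑ P i j (p i − q j) = 0` turns the relative entropy into `∑ P i j q j klFun (p i / q j)`: a sum
of nonnegative terms vanishing exactly when `p i = q j` wherever `W i j ≠ 0`, i.e. when
`diag(p) W = W diag(q)`, i.e. when `ρ = σ`. The support hypothesis makes `W i j = 0` whenever
`p i ≠ 0 = q j`, which keeps the `log 0` terms harmless.
-/

open Real InformationTheory

lemma mul_log_sub_log_sub_sub_eq_mul_klFun {x y : ℝ} (hxy : y = 0 → x = 0) :
    x * (log x - log y) - (x - y) = y * klFun (x / y) := by
  rcases eq_or_ne y 0 with rfl | hy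
  · simp [hxy rfl]
  rcases eq_or_ne x 0 with rfl | hx
  · simp [klFun_apply]
  rw [klFun_apply, log_div hx hy]
  field_simp
  ring

lemma mul_klFun_div_eq_zero_iff {x y : ℝ} (hx : 0 ≤ x) (hy : 0 ≤ y) (hxy : y = 0 → x = 0) :
    y * klFun (x / y) = 0 ↔ x = y := by
  rcases eq_or_ne y 0 with rfl | hy'
  · simp [hxy rfl]
  rw [mul_eq_zero, klFun_eq_zero_iff (div_nonneg hx hy), div_eq_one_iff_eq hy']
  simp [hy']

section DoublyStochastic

variable {ι : Type*} [Fintype ι] [DecidableEq ι] {p q : ι → ℝ} {P : Matrix ι ι ℝ}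

lemma sum_mul_log_sub_sum_mul_log_eq_sum_klFun (hP : P ∈ doublyStochastic ℝ ι)
    (hpq : ∑ i, p i = ∑ j, q j) (hsupp : ∀ i j, P i j ≠ 0 → q j = 0 → p i = 0) :
    ∑ i, p i * log (p i) - ∑ i, ∑ j, p i * P i j * log (q j) =
      ∑ i, ∑ j, P i j * (q j * klFun (p i / q j)) := by
  have hrow (f : ι → ℝ) : ∑ i, ∑ j, P i j * f i = ∑ i, f i := by
    simp [← Finset.sum_mul, sum_row_of_mem_doublyStochastic hP]
  have hcol (f : ι → ℝ) : ∑ i, ∑ j, P i j * f j = ∑ j, f j := by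
    rw [Finset.sum_comm]
    simp [← Finset.sum_mul, sum_col_of_mem_doublyStochastic hP]
  have hterm (i j : ι) : P i j * (q j * klFun (p i / q j)) =
      P i j * (p i * log (p i)) - p i * P i j * log (q j) - (P i j * p i - P i j * q j) := by
    by_cases h : P i j = 0
    · simp [h]
    rw [← mul_log_sub_log_sub_sub_eq_mul_klFun (hsupp i j h)]
    ring
  simp only [hterm, Finset.sum_sub_distrib, hrow, hcol, hpq]
  ring

theorem klein_of_mem_doublyStochastic (hP : P ∈ doublyStochastic ℝ ι) (hp : 0 ≤ p) (hq : 0 ≤ q)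
    (hpq : ∑ i, p i = ∑ j, q j) (hsupp : ∀ i j, P i j ≠ 0 → q j = 0 → p i = 0) :
    0 ≤ ∑ i, p i * log (p i) - ∑ i, ∑ j, p i * P i j * log (q j) ∧
      (∑ i, p i * log (p i) - ∑ i, ∑ j, p i * P i j * log (q j) = 0 ↔
        ∀ i j, P i j ≠ 0 → p i = q j) := by
  have hterm (x : ι × ι) : 0 ≤ P x.1 x.2 * (q x.2 * klFun (p x.1 / q x.2)) :=
    mul_nonneg (nonneg_of_mem_doublyStochastic hP)
      (mul_nonneg (hq _) (klFun_nonneg (div_nonneg (hp _) (hq _))))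
  rw [sum_mul_log_sub_sum_mul_log_eq_sum_klFun hP hpq hsupp, ← Fintype.sum_prod_type']
  refine ⟨Fintype.sum_nonneg hterm, ?_⟩
  rw [Fintype.sum_eq_zero_iff_of_nonneg hterm, funext_iff, Prod.forall]
  refine forall₂_congr fun i j => ?_
  rw [Pi.zero_apply, mul_eq_zero, or_iff_not_imp_left]
  exact imp_congr_right fun h => mul_klFun_div_eq_zero_iff (hp i) (hq j) (hsupp i j h)

end DoublyStochastic

lemma conj_eq_conj_iff {R : Type*} [Monoid R] [StarMul R] {u v : R} (hu : u ∈ unitary R)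
    (hv : v ∈ unitary R) (a b : R) :
    u * a * star u = v * b * star v ↔ a * (star u * v) = star u * v * b := by
  constructor
  · intro h
    calc a * (star u * v) = star u * (u * a * star u) * v := by
          simp only [← mul_assoc, Unitary.star_mul_self_of_mem hu, one_mul]
      _ = star u * v * b := by
          simp only [h, mul_assoc, Unitary.star_mul_self_of_mem hv, mul_one]
  · intro h
    calc u * a * star u = u * (a * (star u * v)) * star v := by
          simp only [mul_assoc, Unitary.mul_star_self_of_mem hv, mul_one]
      _ = v * b * star v := by
          simp only [h, ← mul_assoc, Unitary.mul_star_self_of_mem hu, one_mul]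

namespace Matrix

variable {n : Type*} [Fintype n]

lemma mem_range_mulVecLin_of_mulVec_eq_smul {R : Type*} [Field R] {A : Matrix n n R}
    {u : n → R} {c : R} (hc : c ≠ 0) (h : A *ᵥ u = c • u) : u ∈ LinearMap.range A.mulVecLin :=
  ⟨c⁻¹ • u, by rw [LinearMap.map_smul, mulVecLin_apply, h, smul_smul, inv_mul_cancel₀ hc, one_smul]⟩

lemma IsHermitian.star_dotProduct_eq_zero {R : Type*} [CommRing R] [StarRing R]
    {A : Matrix n n R} (hA : A.IsHermitian) {u v : n → R}
    (hu : u ∈ LinearMap.range A.mulVecLin) (hv : A *ᵥ v = 0) : star u ⬝ᵥ v = 0 := by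
  obtain ⟨x, rfl⟩ := hu
  rw [mulVecLin_apply, star_mulVec, ← dotProduct_mulVec, hA.eq, hv, dotProduct_zero]

variable [DecidableEq n]

lemma diagonal_mul_eq_mul_diagonal_iff {α : Type*} [CommRing α] [NoZeroDivisors α]
    {a b : n → α} {W : Matrix n n α} :
    diagonal a * W = W * diagonal b ↔ ∀ i j, W i j ≠ 0 → a i = b j := by
  simp only [← ext_iff, diagonal_mul, mul_diagonal]
  refine forall₂_congr fun i j => ?_
  rw [mul_comm, ← sub_eq_zero, ← mul_sub, mul_eq_zero, sub_eq_zero, or_iff_not_imp_left]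

lemma normSq_mem_doublyStochastic {W : Matrix n n ℂ} (hW : W ∈ unitaryGroup n ℂ) :
    (of fun i j => Complex.normSq (W i j)) ∈ doublyStochastic ℝ n := by
  have hrow (i : n) : ∑ j, Complex.normSq (W i j) = 1 := by
    have h := congr_fun₂ (mem_unitaryGroup_iff.mp hW) i i
    simp only [mul_apply, star_apply, one_apply_eq, RCLike.star_def, Complex.mul_conj] at h
    exact_mod_cast h
  have hcol (j : n) : ∑ i, Complex.normSq (W i j) = 1 := by
    have h := congr_fun₂ (mem_unitaryGroup_iff'.mp hW) j j
    simp only [mul_apply, star_apply, one_apply_eq, RCLike.star_def, mul_comm _ (W _ j),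
      Complex.mul_conj] at h
    exact_mod_cast h
  exact mem_doublyStochastic_iff_sum.mpr ⟨fun i j => Complex.normSq_nonneg _, hrow, hcol⟩

lemma trace_diagonal_mul_mul_diagonal_mul_star (W : Matrix n n ℂ) (a b : n → ℝ) :
    trace (diagonal (fun i => (a i : ℂ)) * W * diagonal (fun j => (b j : ℂ)) * star W) =
      ((∑ i, ∑ j, a i * Complex.normSq (W i j) * b j : ℝ) : ℂ) := by
  push_cast
  simp only [trace, diag_apply, mul_apply (M := _ * diagonal _), mul_diagonal, diagonal_mul,
    star_apply, RCLike.star_def]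
  refine Finset.sum_congr rfl fun i _ => Finset.sum_congr rfl fun j _ => ?_
  rw [← Complex.mul_conj]
  ring

lemma trace_conj_diagonal_mul_conj_diagonal (U V : Matrix n n ℂ) (a b : n → ℝ) :
    trace (U * diagonal (fun i => (a i : ℂ)) * star U *
        (V * diagonal (fun j => (b j : ℂ)) * star V)) =
      ((∑ i, ∑ j, a i * Complex.normSq ((star U * V) i j) * b j : ℝ) : ℂ) := by
  rw [← trace_diagonal_mul_mul_diagonal_mul_star, star_mul, star_star]
  simp only [Matrix.mul_assoc]
  rw [trace_mul_comm]
  simp only [Matrix.mul_assoc]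

namespace IsHermitian

variable {A B : Matrix n n ℂ} (hA : A.IsHermitian) (hB : B.IsHermitian)

lemma re_trace_mul_conj_diagonal (V : Matrix n n ℂ) (b : n → ℝ) :
    (trace (A * (V * diagonal (fun j => (b j : ℂ)) * star V))).re =
      ∑ i, ∑ j, hA.eigenvalues i *
        Complex.normSq ((star (hA.eigenvectorUnitary : Matrix n n ℂ) * V) i j) * b j := by
  conv_lhs => rw [hA.spectral_theorem, Unitary.conjStarAlgAut_apply]
  exact congrArg Complex.re (trace_conj_diagonal_mul_conj_diagonal _ V _ b)

lemma star_eigenvectorUnitary_mul_eigenvectorUnitary_apply (i j : n) :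
    (star (hA.eigenvectorUnitary : Matrix n n ℂ) * hB.eigenvectorUnitary) i j =
      star ⇑(hA.eigenvectorBasis i) ⬝ᵥ ⇑(hB.eigenvectorBasis j) := by
  simp [mul_apply, dotProduct]

lemma star_eigenvectorUnitary_mul_eigenvectorUnitary_apply_eq_zero
    (hAB : LinearMap.range A.mulVecLin ≤ LinearMap.range B.mulVecLin) {i j : n}
    (hi : hA.eigenvalues i ≠ 0) (hj : hB.eigenvalues j = 0) :
    (star (hA.eigenvectorUnitary : Matrix n n ℂ) * hB.eigenvectorUnitary) i j = 0 := by
  rw [star_eigenvectorUnitary_mul_eigenvectorUnitary_apply]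
  refine hB.star_dotProduct_eq_zero
    (hAB (mem_range_mulVecLin_of_mulVec_eq_smul (c := (hA.eigenvalues i : ℂ)) ?_ ?_)) ?_
  · exact Complex.ofReal_ne_zero.mpr hi
  · rw [hA.mulVec_eigenvectorBasis, RCLike.real_smul_eq_coe_smul (K := ℂ)]
    rfl
  · rw [hB.mulVec_eigenvectorBasis, hj, zero_smul]

lemma eq_iff_forall_eigenvalues_eq :
    A = B ↔ ∀ i j, (star (hA.eigenvectorUnitary : Matrix n n ℂ) * hB.eigenvectorUnitary) i j ≠ 0 →
      hA.eigenvalues i = hB.eigenvalues j := by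
  conv_lhs => rw [hA.spectral_theorem, hB.spectral_theorem]
  simp only [Unitary.conjStarAlgAut_apply,
    conj_eq_conj_iff hA.eigenvectorUnitary.2 hB.eigenvectorUnitary.2,
    diagonal_mul_eq_mul_diagonal_iff, Function.comp_apply, RCLike.ofReal_inj]

end IsHermitian

end Matrix

/-- Klein's inequality: for density matrices `ρ, σ` with
`supp ρ ⊆ supp σ`, `S(ρ‖σ) ≥ 0` with equality iff `ρ = σ`. -/
theorem stmt4 {n : Type*} [Fintype n] [DecidableEq n]
    (ρ σ : Matrix n n ℂ) (hρ : ρ.PosSemidef) (hσ : σ.PosSemidef)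
    (hρ1 : Matrix.trace ρ = 1) (hσ1 : Matrix.trace σ = 1)
    (hsupp : LinearMap.range ρ.mulVecLin ≤ LinearMap.range σ.mulVecLin) :
    0 ≤ qRelEnt hρ.1 hσ.1 ∧ (qRelEnt hρ.1 hσ.1 = 0 ↔ ρ = σ) := by
  set P : Matrix n n ℝ := of fun i j =>
    Complex.normSq ((star (hρ.1.eigenvectorUnitary : Matrix n n ℂ) * hσ.1.eigenvectorUnitary) i j)
  have hP : P ∈ doublyStochastic ℝ n := normSq_mem_doublyStochastic
    (mul_mem (Unitary.star_mem hρ.1.eigenvectorUnitary.2) hσ.1.eigenvectorUnitary.2)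
  have hrel : qRelEnt hρ.1 hσ.1 = ∑ i, hρ.1.eigenvalues i * log (hρ.1.eigenvalues i) -
      ∑ i, ∑ j, hρ.1.eigenvalues i * P i j * log (hσ.1.eigenvalues j) := by
    rw [qRelEnt, entSum, matLog, hρ.1.re_trace_mul_conj_diagonal]
    rfl
  have htrace : ∑ i, hρ.1.eigenvalues i = ∑ j, hσ.1.eigenvalues j := by
    have h := hρ.1.trace_eq_sum_eigenvalues.symm.trans (hρ1.trans hσ1.symm)
    rw [hσ.1.trace_eq_sum_eigenvalues] at h
    exact_mod_cast h
  have hsuppP (i j : n) (hPij : P i j ≠ 0) (hj : hσ.1.eigenvalues j = 0) :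
      hρ.1.eigenvalues i = 0 := by
    by_contra hi
    exact hPij (by simp [P, hρ.1.star_eigenvectorUnitary_mul_eigenvectorUnitary_apply_eq_zero
      hσ.1 hsupp hi hj])
  obtain ⟨hnonneg, hzero⟩ := klein_of_mem_doublyStochastic hP hρ.eigenvalues_nonneg
    hσ.eigenvalues_nonneg htrace hsuppP
  rw [hrel, hρ.1.eq_iff_forall_eigenvalues_eq hσ.1]
  exact ⟨hnonneg, hzero.trans (by simp [P])⟩
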